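/- There exists u* with P(u*) > 0 such that F is strictly decreasing on the interval ((1+√21)/4, u*) and strictly increasing on (u*, ∞); consequently F attains a global minimum F* = F(u*) on the set {u > 0 : P(u) > 0}, and F* > 0. -/

import Mathlib

open Real Finset

noncomputable def Pfun (u : ℝ) : ℝ := 4 * u ^ 2 - 2 * u - 5

noncomputable def Ffun (u : ℝ) : ℝ :=
  (u + 1) * (5 * u + 4) * (u ^ 2 + u + 1) / (u * (4 * u ^ 2 - 2 * u - 5)) - Real.log u

noncomputable def Fstar : ℝ := sInf {y : ℝ | ∃ u : ℝ, 0 < u ∧ 0 < Pfun u ∧ y = Ffun u}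

/-! Since `F' = Qfun / (u P(u))²`, on `u > (1 + √21) / 4` the sign of `F'` is that of the sextic
`Qfun`. `Qfun` is negative on `[1, 4]` and strictly increasing on `[4, ∞)`, so it changes sign
exactly once, at some `u* > 4`, where `F` attains its minimum. Writing `F = N / D - log u`, one has
`N - (u - 1) D = u⁴ + 20u³ + 21u² + 8u + 4 > 0`, so `F > u - 1 - log u ≥ 0` on the whole domain. -/

noncomputable def pRoot : ℝ := (1 + √21) / 4

noncomputable def Qfun (u : ℝ) : ℝ :=
  20 * u ^ 6 - 36 * u ^ 5 - 159 * u ^ 4 - 208 * u ^ 3 - 132 * u ^ 2 - 9 * u + 20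

lemma one_lt_pRoot : 1 < pRoot := by
  have : (3 : ℝ) < √21 := Real.lt_sqrt_of_sq_lt (by norm_num)
  unfold pRoot; linarith

lemma pRoot_lt_four : pRoot < 4 := by
  have : √21 < 15 := (Real.sqrt_lt' (by norm_num)).2 (by norm_num)
  unfold pRoot; linarith

lemma Pfun_eq_mul_div (u : ℝ) : Pfun u = (4 * u - 1 - √21) * (4 * u - 1 + √21) / 4 := by
  have := Real.sq_sqrt (show (0 : ℝ) ≤ 21 by norm_num)
  unfold Pfun; linear_combination this / 4

lemma Pfun_pos_iff {u : ℝ} (hu : 0 < u) : 0 < Pfun u ↔ pRoot < u := by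
  have hfactor : 0 < (4 * u - 1 + √21) / 4 := by
    have := one_lt_pRoot
    unfold pRoot at this
    linarith
  rw [Pfun_eq_mul_div, mul_div_assoc, mul_pos_iff_of_pos_right hfactor, pRoot]
  constructor <;> intro h <;> linarith

lemma Qfun_neg_of_mem_Icc {u : ℝ} (h1 : 1 ≤ u) (h4 : u ≤ 4) : Qfun u < 0 := by
  have hu : 0 < u := by linarith
  have hsplit : Qfun u = u ^ 4 * ((u - 4) * (20 * u + 44)) + u ^ 3 * (17 * u - 208)
      - (132 * u ^ 2 + 9 * u - 20) := by unfold Qfun; ring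
  have h₁ : u ^ 4 * ((u - 4) * (20 * u + 44)) ≤ 0 := mul_nonpos_of_nonneg_of_nonpos
    (by positivity) (mul_nonpos_of_nonpos_of_nonneg (by linarith) (by linarith))
  have h₂ : u ^ 3 * (17 * u - 208) < 0 := mul_neg_of_pos_of_neg (by positivity) (by linarith)
  nlinarith

lemma hasDerivAt_Qfun (u : ℝ) :
    HasDerivAt Qfun (120 * u ^ 5 - 180 * u ^ 4 - 636 * u ^ 3 - 624 * u ^ 2 - 264 * u - 9) u :=
  ((((((((hasDerivAt_pow 6 u).const_mul 20).sub ((hasDerivAt_pow 5 u).const_mul 36)).sub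
    ((hasDerivAt_pow 4 u).const_mul 159)).sub ((hasDerivAt_pow 3 u).const_mul 208)).sub
    ((hasDerivAt_pow 2 u).const_mul 132)).sub ((hasDerivAt_id u).const_mul 9)).add_const 20).congr_deriv
    (by norm_num; ring)

lemma strictMonoOn_Qfun : StrictMonoOn Qfun (Set.Ici 4) := by
  refine strictMonoOn_of_hasDerivWithinAt_pos (convex_Ici 4)
    (fun u _ ↦ (hasDerivAt_Qfun u).continuousAt.continuousWithinAt)
    (fun u _ ↦ (hasDerivAt_Qfun u).hasDerivWithinAt) fun u hu ↦ ?_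
  rw [interior_Ici, Set.mem_Ioi] at hu
  have h₁ : 0 ≤ u ^ 3 * (u - 4) * (120 * u + 300) := by
    have : 0 ≤ u - 4 := by linarith
    positivity
  have h₂ : 0 < u ^ 2 * (u - 4) := mul_pos (by positivity) (by linarith)
  nlinarith

lemma exists_Qfun_sign_change :
    ∃ w, 4 < w ∧ (∀ u, 1 ≤ u → u < w → Qfun u < 0) ∧ ∀ u, w < u → 0 < Qfun u := by
  have hcont : Continuous Qfun := by unfold Qfun; fun_prop
  obtain ⟨w, ⟨hw4, -⟩, hw⟩ := intermediate_value_Ioo (by norm_num : (4 : ℝ) ≤ 5) hcont.continuousOn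
    (show Qfun 4 < 0 ∧ 0 < Qfun 5 by unfold Qfun; norm_num)
  have hw_mem : w ∈ Set.Ici 4 := hw4.le
  refine ⟨w, hw4, fun u h1 huw ↦ ?_, fun u hwu ↦ ?_⟩
  · rcases le_or_gt u 4 with h4 | h4
    · exact Qfun_neg_of_mem_Icc h1 h4
    · exact hw ▸ strictMonoOn_Qfun h4.le hw_mem huw
  · exact hw ▸ strictMonoOn_Qfun hw_mem (hw4.trans hwu).le hwu

lemma hasDerivAt_Ffun {u : ℝ} (hu : u ≠ 0) (hP : Pfun u ≠ 0) :
    HasDerivAt Ffun (Qfun u / (u * Pfun u) ^ 2) u := by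
  have hnum : HasDerivAt (fun x : ℝ ↦ (x + 1) * (5 * x + 4) * (x ^ 2 + x + 1))
      (20 * u ^ 3 + 42 * u ^ 2 + 36 * u + 13) u :=
    ((((hasDerivAt_id u).add_const 1).mul (((hasDerivAt_id u).const_mul 5).add_const 4)).mul
      (((hasDerivAt_pow 2 u).add (hasDerivAt_id u)).add_const 1)).congr_deriv (by norm_num; ring)
  have hden : HasDerivAt (fun x : ℝ ↦ x * Pfun x) (12 * u ^ 2 - 4 * u - 5) u :=
    ((hasDerivAt_id u).mul ((((hasDerivAt_pow 2 u).const_mul 4).sub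
      ((hasDerivAt_id u).const_mul 2)).sub_const 5)).congr_deriv (by norm_num; ring)
  refine ((hnum.div hden (mul_ne_zero hu hP)).sub (Real.hasDerivAt_log hu)).congr_deriv ?_
  unfold Qfun Pfun
  have hD : (u * (4 * u ^ 2 - 2 * u - 5)) ^ 2 ≠ 0 := pow_ne_zero 2 (mul_ne_zero hu hP)
  rw [inv_eq_one_div, div_sub_div _ _ hD hu, div_eq_div_iff (mul_ne_zero hD hu) hD]
  ring

lemma mul_Pfun_pos_of_pRoot_lt {u : ℝ} (hu : pRoot < u) : 0 < u * Pfun u := by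
  have hu₀ : 0 < u := one_pos.trans (one_lt_pRoot.trans hu)
  exact mul_pos hu₀ ((Pfun_pos_iff hu₀).2 hu)

lemma hasDerivAt_Ffun_of_pRoot_lt {u : ℝ} (hu : pRoot < u) :
    HasDerivAt Ffun (Qfun u / (u * Pfun u) ^ 2) u := by
  obtain ⟨hu₀, hP⟩ := mul_ne_zero_iff.1 (mul_Pfun_pos_of_pRoot_lt hu).ne'
  exact hasDerivAt_Ffun hu₀ hP

lemma strictAntiOn_Ffun {w : ℝ} (hQ : ∀ u, 1 ≤ u → u < w → Qfun u < 0) :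
    StrictAntiOn Ffun (Set.Ioc pRoot w) := by
  refine strictAntiOn_of_hasDerivWithinAt_neg (convex_Ioc _ _)
    (fun u hu ↦ (hasDerivAt_Ffun_of_pRoot_lt hu.1).continuousAt.continuousWithinAt)
    (fun u hu ↦ (hasDerivAt_Ffun_of_pRoot_lt (interior_subset hu).1).hasDerivWithinAt)
    fun u hu ↦ ?_
  rw [interior_Ioc] at hu
  exact div_neg_of_neg_of_pos (hQ u (one_lt_pRoot.trans hu.1).le hu.2)
    (pow_pos (mul_Pfun_pos_of_pRoot_lt hu.1) 2)

lemma strictMonoOn_Ffun {w : ℝ} (hw : pRoot < w) (hQ : ∀ u, w < u → 0 < Qfun u) :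
    StrictMonoOn Ffun (Set.Ici w) := by
  have hderiv {u : ℝ} (hu : w ≤ u) := hasDerivAt_Ffun_of_pRoot_lt (hw.trans_le hu)
  refine strictMonoOn_of_hasDerivWithinAt_pos (convex_Ici _)
    (fun u hu ↦ (hderiv hu).continuousAt.continuousWithinAt)
    (fun u hu ↦ (hderiv (interior_subset hu)).hasDerivWithinAt) fun u hu ↦ ?_
  rw [interior_Ici] at hu
  exact div_pos (hQ u hu) (pow_pos (mul_Pfun_pos_of_pRoot_lt (hw.trans hu)) 2)

lemma Ffun_pos {u : ℝ} (hu : 0 < u) (hP : 0 < Pfun u) : 0 < Ffun u := by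
  have hD : 0 < u * Pfun u := mul_pos hu hP
  have hlog := Real.log_le_sub_one_of_pos hu
  have hrat : u - 1 < (u + 1) * (5 * u + 4) * (u ^ 2 + u + 1) / (u * Pfun u) := by
    rw [lt_div_iff₀ hD, ← sub_pos]
    have hgap : (u + 1) * (5 * u + 4) * (u ^ 2 + u + 1) - (u - 1) * (u * Pfun u) =
        u ^ 4 + 20 * u ^ 3 + 21 * u ^ 2 + 8 * u + 4 := by unfold Pfun; ring
    rw [hgap]; positivity
  unfold Ffun; unfold Pfun at hrat
  linarith

/-- There exists u* with P(u*) > 0 such that F is strictly decreasing on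
((1+√21)/4, u*) and strictly increasing on (u*, ∞); consequently F attains a global minimum
F* = F(u*) on the set {u > 0 : P(u) > 0}, and F* > 0. -/
theorem Ffun_attains_positive_minimum :
    ∃ ustar : ℝ, 0 < ustar ∧ 0 < Pfun ustar ∧
      StrictAntiOn Ffun (Set.Ioo ((1 + Real.sqrt 21) / 4) ustar) ∧
      StrictMonoOn Ffun (Set.Ioi ustar) ∧
      (∀ u : ℝ, 0 < u → 0 < Pfun u → Ffun ustar ≤ Ffun u) ∧
      Fstar = Ffun ustar ∧
      0 < Fstar := by
  obtain ⟨w, hw4, hQneg, hQpos⟩ := exists_Qfun_sign_change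
  have hrw : pRoot < w := pRoot_lt_four.trans hw4
  have hw : 0 < w := one_pos.trans (one_lt_pRoot.trans hrw)
  have hPw : 0 < Pfun w := (Pfun_pos_iff hw).2 hrw
  have hanti := strictAntiOn_Ffun hQneg
  have hmono := strictMonoOn_Ffun hrw hQpos
  have hmin (u : ℝ) (hu : 0 < u) (hP : 0 < Pfun u) : Ffun w ≤ Ffun u :=
    isMinOn_Ioi_of_anti_mono hanti.antitoneOn hmono.monotoneOn ((Pfun_pos_iff hu).1 hP)
  have hFstar : Fstar = Ffun w :=
    IsLeast.csInf_eq ⟨⟨w, hw, hPw, rfl⟩, by rintro _ ⟨u, hu, hP, rfl⟩; exact hmin u hu hP⟩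
  exact ⟨w, hw, hPw, hanti.mono Set.Ioo_subset_Ioc_self, hmono.mono Set.Ioi_subset_Ici_self, hmin,
    hFstar, hFstar ▸ Ffun_pos hw hPw⟩
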